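/- arXiv:2206.02455 — 3 statements merged into one kernel-verified Lean document; each statement's English description precedes it below -/
import Mathlib

section
/- Let S_0, S_1, ..., S_k be a homogeneous binary symmetric Markov chain on {-1,1} with P[S_0 = 1] = 1/2 and flip probability δ ∈ [0,1/2]. Let S̄ = (1/k)∑_{j=1}^k S_j be the average of the signs. Then 0 ≤ S̄² ≤ 1 almost surely, and Var(S̄²) ≤ E[1 - S̄²] ≤ 4δk. -/
/-!
Since `|S̄| ≤ 1`, the variable `X = S̄²` takes values in `[0, 1]`, so
`Var X = E[X²] - (E X)² ≤ E X - (E X)² ≤ 1 - E X = E[1 - X]`.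
Moreover `1 - S̄²` vanishes on the two constant paths, which together have probability
`(1 - δ)^k ≥ 1 - kδ` by Bernoulli's inequality; as `1 - S̄² ≤ 1`, this gives `E[1 - S̄²] ≤ kδ`.
-/

/-- The value of a sign: `true ↦ 1`, `false ↦ -1`. -/
noncomputable def sgn (b : Bool) : ℝ := if b then 1 else -1

/-- Probability mass of the sign sequence `s = (S_0, S_1, …, S_k)` for a homogeneous
binary symmetric Markov chain with uniform start and flip probability `δ`. -/
noncomputable def markovP (δ : ℝ) (k : ℕ) (s : Fin (k + 1) → Bool) : ℝ :=
  (1 / 2) * ∏ i : Fin k, (if s i.succ = s i.castSucc then 1 - δ else δ)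

/-- Expectation of `f` under the Markov sign chain. -/
noncomputable def markovE (δ : ℝ) (k : ℕ) (f : (Fin (k + 1) → Bool) → ℝ) : ℝ :=
  ∑ s : Fin (k + 1) → Bool, markovP δ k s * f s

/-- The average `S̄ = (1/k) ∑_{j=1}^k S_j` of the signs. -/
noncomputable def sbar (k : ℕ) (s : Fin (k + 1) → Bool) : ℝ :=
  (1 / (k : ℝ)) * ∑ i : Fin k, sgn (s i.succ)

open Finset

section WeightedSums

variable {ι : Type*} [Fintype ι] {p X : ι → ℝ}

theorem weighted_variance_le_of_mem_unitInterval (hp : ∀ i, 0 ≤ p i) (hp1 : ∑ i, p i = 1)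
    (hX : ∀ i, X i ∈ Set.Icc (0 : ℝ) 1) :
    ∑ i, p i * (X i - ∑ j, p j * X j) ^ 2 ≤ ∑ i, p i * (1 - X i) := by
  set μ := ∑ j, p j * X j
  have hvar : ∑ i, p i * (X i - μ) ^ 2 = ∑ i, p i * X i ^ 2 - μ ^ 2 := by
    have h i : p i * (X i - μ) ^ 2 = p i * X i ^ 2 - 2 * μ * (p i * X i) + μ ^ 2 * p i := by
      ring
    simp only [h, sum_add_distrib, sum_sub_distrib, ← mul_sum, hp1]
    ring
  have hsq : ∑ i, p i * X i ^ 2 ≤ μ := sum_le_sum fun i _ =>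
    mul_le_mul_of_nonneg_left (pow_le_of_le_one (hX i).1 (hX i).2 two_ne_zero) (hp i)
  have hone : ∑ i, p i * (1 - X i) = 1 - μ := by
    simp only [mul_sub, mul_one, sum_sub_distrib, hp1, μ]
  rw [hvar, hone]
  nlinarith [sq_nonneg (1 - μ)]

theorem weighted_sum_le_one_sub_of_eq_zero [DecidableEq ι] (A : Finset ι)
    (hp : ∀ i, 0 ≤ p i) (hp1 : ∑ i, p i = 1) (hX : ∀ i, X i ≤ 1) (hA : ∀ i ∈ A, X i = 0) :
    ∑ i, p i * X i ≤ 1 - ∑ i ∈ A, p i := by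
  calc ∑ i, p i * X i = ∑ i ∈ Aᶜ, p i * X i := by
        rw [← sum_add_sum_compl A, sum_eq_zero fun i hi => by simp [hA i hi], zero_add]
    _ ≤ ∑ i ∈ Aᶜ, p i := sum_le_sum fun i _ => mul_le_of_le_one_right (hp i) (hX i)
    _ = 1 - ∑ i ∈ A, p i := by rw [← hp1, ← sum_add_sum_compl A p, add_sub_cancel_left]

end WeightedSums

theorem sgn_sq (b : Bool) : sgn b ^ 2 = 1 := by
  cases b <;> norm_num [sgn]

theorem abs_sgn (b : Bool) : |sgn b| = 1 := by
  cases b <;> norm_num [sgn]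

theorem abs_sbar_le_one (k : ℕ) (s : Fin (k + 1) → Bool) : |sbar k s| ≤ 1 := by
  rcases k.eq_zero_or_pos with rfl | hk
  · simp [sbar]
  have hk' : (0 : ℝ) < k := by exact_mod_cast hk
  calc |sbar k s| = |∑ i : Fin k, sgn (s i.succ)| / k := by
        rw [sbar, abs_mul, abs_of_pos (by positivity), one_div_mul_eq_div]
    _ ≤ (∑ i : Fin k, |sgn (s i.succ)|) / k := by gcongr; exact abs_sum_le_sum_abs _ _
    _ = 1 := by simp [abs_sgn, hk'.ne']

theorem sbar_sq_mem_unitInterval (k : ℕ) (s : Fin (k + 1) → Bool) :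
    sbar k s ^ 2 ∈ Set.Icc (0 : ℝ) 1 :=
  ⟨sq_nonneg _, (sq_le_one_iff_abs_le_one _).2 (abs_sbar_le_one k s)⟩

theorem sbar_const {k : ℕ} (hk : k ≠ 0) (b : Bool) : sbar k (Function.const _ b) = sgn b := by
  simp [sbar, hk]

theorem sum_transition_weight_eq_one (δ : ℝ) (a : Bool) :
    ∑ b : Bool, (if a = b then 1 - δ else δ) = 1 := by
  cases a <;> simp

theorem sum_prod_transition_weights_eq_two (δ : ℝ) (k : ℕ) :
    ∑ s : Fin (k + 1) → Bool, ∏ i : Fin k, (if s i.succ = s i.castSucc then 1 - δ else δ) = 2 := by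
  induction k with
  | zero => simp
  | succ k ih =>
    rw [← (Fin.consEquiv fun _ => Bool).sum_comp, Fintype.sum_prod_type, sum_comm]
    simp only [Fin.prod_univ_succ, Fin.consEquiv_apply, Fin.cons_succ, Fin.castSucc_zero,
      Fin.cons_zero, ← Fin.succ_castSucc, ← sum_mul, sum_transition_weight_eq_one, one_mul]
    exact ih

section MarkovChain

variable {δ : ℝ} {k : ℕ}

theorem markovP_nonneg (hδ0 : 0 ≤ δ) (hδ1 : δ ≤ 1) (s : Fin (k + 1) → Bool) :
    0 ≤ markovP δ k s :=
  mul_nonneg (by norm_num) <| prod_nonneg fun i _ => by split_ifs <;> linarith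

theorem sum_markovP (δ : ℝ) (k : ℕ) : ∑ s : Fin (k + 1) → Bool, markovP δ k s = 1 := by
  simp only [markovP, ← mul_sum, sum_prod_transition_weights_eq_two]
  norm_num

theorem markovP_const (δ : ℝ) (k : ℕ) (b : Bool) :
    markovP δ k (Function.const _ b) = (1 - δ) ^ k / 2 := by
  simp [markovP, div_eq_inv_mul]

theorem markovE_sbar_sq_variance_le (hδ0 : 0 ≤ δ) (hδ1 : δ ≤ 1) :
    markovE δ k (fun s => (sbar k s ^ 2 - markovE δ k fun s' => sbar k s' ^ 2) ^ 2) ≤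
      markovE δ k fun s => 1 - sbar k s ^ 2 :=
  weighted_variance_le_of_mem_unitInterval (markovP_nonneg hδ0 hδ1) (sum_markovP δ k)
    (sbar_sq_mem_unitInterval k)

theorem markovE_one_sub_sbar_sq_le (hk : k ≠ 0) (hδ0 : 0 ≤ δ) (hδ1 : δ ≤ 1) :
    markovE δ k (fun s => 1 - sbar k s ^ 2) ≤ 1 - (1 - δ) ^ k := by
  have hconst : Function.const (Fin (k + 1)) true ≠ Function.const _ false :=
    fun h => Bool.noConfusion (congrFun h 0)
  calc markovE δ k (fun s => 1 - sbar k s ^ 2)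
      ≤ 1 - ∑ s ∈ {Function.const _ true, Function.const _ false}, markovP δ k s := by
        refine weighted_sum_le_one_sub_of_eq_zero _ (markovP_nonneg hδ0 hδ1) (sum_markovP δ k)
          (fun s => by linarith [sq_nonneg (sbar k s)]) ?_
        simp [sbar_const hk, sgn_sq]
    _ = 1 - (1 - δ) ^ k := by
        rw [sum_pair hconst, markovP_const, markovP_const, add_halves]

end MarkovChain

/-- For a homogeneous binary symmetric Markov chain on `{-1,1}` with `P[S_0 = 1] = 1/2`
and flip probability `δ ∈ [0, 1/2]`: `0 ≤ S̄² ≤ 1` always, and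
`Var(S̄²) ≤ E[1 - S̄²] ≤ 4δk`. -/
theorem stmt1 (k : ℕ) (hk : 1 ≤ k) (δ : ℝ) (hδ0 : 0 ≤ δ) (hδ1 : δ ≤ 1 / 2) :
    (∀ s : Fin (k + 1) → Bool, 0 ≤ (sbar k s) ^ 2 ∧ (sbar k s) ^ 2 ≤ 1) ∧
    markovE δ k (fun s => ((sbar k s) ^ 2 - markovE δ k (fun s' => (sbar k s') ^ 2)) ^ 2)
      ≤ markovE δ k (fun s => 1 - (sbar k s) ^ 2) ∧
    markovE δ k (fun s => 1 - (sbar k s) ^ 2) ≤ 4 * δ * k := by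
  have hδ1' : δ ≤ 1 := by linarith
  have bernoulli : 1 - k * δ ≤ (1 - δ) ^ k := by
    simpa [← sub_eq_add_neg] using one_add_mul_le_pow (a := -δ) (by linarith) k
  refine ⟨sbar_sq_mem_unitInterval k, markovE_sbar_sq_variance_le hδ0 hδ1', ?_⟩
  calc markovE δ k (fun s => 1 - sbar k s ^ 2) ≤ 1 - (1 - δ) ^ k :=
        markovE_one_sub_sbar_sq_le (Nat.one_le_iff_ne_zero.1 hk) hδ0 hδ1'
    _ ≤ 4 * δ * k := by nlinarith [(Nat.cast_nonneg k : (0 : ℝ) ≤ k)]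
end

section
/- Let h_b(δ) = -δ·log(δ) - (1-δ)·log(1-δ) be the binary entropy (natural log). Then for every ε ∈ (0, 1/2): h_b(1/2 - ε) ≥ log(2) - 5ε². -/
namespace Real

/-- `log` lies below its tangent line at `1 / c`. -/
theorem mul_log_le_mul_tangent {y c : ℝ} (hy : 0 ≤ y) (hc : 0 < c) :
    y * log y ≤ y * (c * y - 1 - log c) := by
  rcases hy.eq_or_lt with rfl | hy
  · simp
  refine mul_le_mul_of_nonneg_left ?_ hy.le
  have := log_le_sub_one_of_pos (mul_pos hc hy)
  rw [log_mul hc.ne' hy.ne'] at this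
  linarith

theorem log_two_sub_sq_le_binEntropy {p : ℝ} (hp₀ : 0 ≤ p) (hp₁ : p ≤ 1) :
    log 2 - (1 - 2 * p) ^ 2 ≤ binEntropy p := by
  have hp := mul_log_le_mul_tangent hp₀ two_pos
  have hq := mul_log_le_mul_tangent (sub_nonneg.2 hp₁) two_pos
  rw [binEntropy_eq_negMulLog_add_negMulLog_one_sub, negMulLog, negMulLog]
  linear_combination hp + hq

end Real

/-- For the binary entropy `h_b(δ) = -δ log δ - (1-δ) log(1-δ)` (natural logarithm),
and every `ε ∈ (0, 1/2)`: `h_b(1/2 - ε) ≥ log 2 - 5ε²`. -/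
theorem stmt13 (ε : ℝ) (h0 : 0 < ε) (h1 : ε < 1 / 2) :
    Real.log 2 - 5 * ε ^ 2 ≤
      -((1 / 2 - ε) * Real.log (1 / 2 - ε)) -
        (1 - (1 / 2 - ε)) * Real.log (1 - (1 / 2 - ε)) := by
  have h := Real.log_two_sub_sq_le_binEntropy (p := 1 / 2 - ε) (by linarith) (by linarith)
  rw [Real.binEntropy_eq_negMulLog_add_negMulLog_one_sub, Real.negMulLog,
    Real.negMulLog] at h
  linear_combination h + sq_nonneg ε
end

section
/- For any integer d ≥ 2 and any α, β with 0 < β ≤ α ≤ π/2: (∫_0^α sin^{d-2}(x) dx) / (∫_0^β sin^{d-2}(x) dx) ≤ sec(α) · sin^{d-1}(α)/sin^{d-1}(β). -/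
/-!
Substituting `u = sin x` gives `∫₀^γ sin^n x cos x dx = sin^{n+1} γ / (n+1)`. Since `cos α ≤ cos x ≤ 1`
on `[0, α]`, this integral is squeezed: `cos α · ∫₀^α sin^n ≤ sin^{n+1} α / (n+1)` and
`sin^{n+1} β / (n+1) ≤ ∫₀^β sin^n`. Multiplying the first by `sin^{n+1} β` and the second by
`sin^{n+1} α` chains them into the claim with `n = d - 2`.
-/

open Real intervalIntegral

theorem integral_sin_pow_mul_cos (n : ℕ) (γ : ℝ) :
    ∫ x in (0 : ℝ)..γ, sin x ^ n * cos x = sin γ ^ (n + 1) / (n + 1) := by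
  simpa [integral_pow] using integral_comp_mul_deriv (a := 0) (b := γ) (g := fun u => u ^ n)
    (fun x _ => hasDerivAt_sin x) continuousOn_cos (continuous_pow n)

theorem sin_pow_nonneg_of_mem_Icc {x : ℝ} (hx : x ∈ Set.Icc 0 π) (n : ℕ) : 0 ≤ sin x ^ n :=
  pow_nonneg (sin_nonneg_of_nonneg_of_le_pi hx.1 hx.2) n

theorem cos_mul_integral_sin_pow_le (n : ℕ) {α : ℝ} (hα₀ : 0 ≤ α) (hαπ : α ≤ π) :
    cos α * ∫ x in (0 : ℝ)..α, sin x ^ n ≤ sin α ^ (n + 1) / (n + 1) := by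
  rw [← integral_sin_pow_mul_cos, ← integral_const_mul]
  refine integral_mono_on hα₀ ((by fun_prop : Continuous _).intervalIntegrable _ _)
    ((by fun_prop : Continuous _).intervalIntegrable _ _) fun x hx => ?_
  have hcos : cos α ≤ cos x := cos_le_cos_of_nonneg_of_le_pi hx.1 hαπ hx.2
  nlinarith [sin_pow_nonneg_of_mem_Icc ⟨hx.1, hx.2.trans hαπ⟩ n]

theorem sin_pow_succ_div_le_integral_sin_pow (n : ℕ) {β : ℝ} (hβ₀ : 0 ≤ β) (hβπ : β ≤ π) :
    sin β ^ (n + 1) / (n + 1) ≤ ∫ x in (0 : ℝ)..β, sin x ^ n := by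
  rw [← integral_sin_pow_mul_cos]
  refine integral_mono_on hβ₀ ((by fun_prop : Continuous _).intervalIntegrable _ _)
    ((by fun_prop : Continuous _).intervalIntegrable _ _) fun x hx => ?_
  nlinarith [sin_pow_nonneg_of_mem_Icc ⟨hx.1, hx.2.trans hβπ⟩ n, cos_le_one x]

/-- For `d ≥ 2` and angles `0 < β ≤ α ≤ π/2`, the ratio of spherical-cap areas satisfies
`(∫_0^α sin^{d-2} x dx)/(∫_0^β sin^{d-2} x dx) ≤ sec(α)·sin^{d-1}(α)/sin^{d-1}(β)`,
stated in multiplied-out form (so that it remains meaningful at `α = π/2`). -/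
theorem stmt17 (d : ℕ) (hd : 2 ≤ d) (α β : ℝ) (hβ : 0 < β) (hβα : β ≤ α)
    (hα : α ≤ Real.pi / 2) :
    Real.cos α * Real.sin β ^ (d - 1) * (∫ x in (0 : ℝ)..α, Real.sin x ^ (d - 2)) ≤
      Real.sin α ^ (d - 1) * ∫ x in (0 : ℝ)..β, Real.sin x ^ (d - 2) := by
  obtain ⟨n, rfl⟩ : ∃ n, d = n + 2 := ⟨d - 2, by omega⟩
  rw [show n + 2 - 1 = n + 1 by omega, show n + 2 - 2 = n by omega]
  have hαπ : α ≤ π := by linarith [pi_pos]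
  have hβπ : β ≤ π := hβα.trans hαπ
  have hsinα := sin_pow_nonneg_of_mem_Icc ⟨hβ.le.trans hβα, hαπ⟩ (n + 1)
  have hsinβ := sin_pow_nonneg_of_mem_Icc ⟨hβ.le, hβπ⟩ (n + 1)
  calc cos α * sin β ^ (n + 1) * ∫ x in (0 : ℝ)..α, sin x ^ n
      = sin β ^ (n + 1) * (cos α * ∫ x in (0 : ℝ)..α, sin x ^ n) := by ring
    _ ≤ sin β ^ (n + 1) * (sin α ^ (n + 1) / (n + 1)) :=
        mul_le_mul_of_nonneg_left (cos_mul_integral_sin_pow_le n (hβ.le.trans hβα) hαπ) hsinβ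
    _ = sin α ^ (n + 1) * (sin β ^ (n + 1) / (n + 1)) := by ring
    _ ≤ sin α ^ (n + 1) * ∫ x in (0 : ℝ)..β, sin x ^ n :=
        mul_le_mul_of_nonneg_left (sin_pow_succ_div_le_integral_sin_pow n hβ.le hβπ) hsinα
end
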